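/- For M = {A, B} with A = diag(2,1,1) and B = [[0,1,1],[0,1,1],[0,1,1]]: the norms ‖B Aᵗ‖ are uniformly bounded in t, and the second coordinate of any trajectory starting from e = (1,1,1)ᵀ is nondecreasing; hence ρ̃_e(M) = ρ̃(M) = 1. -/

import Mathlib

open Matrix Filter

noncomputable section

/-- Discrete-time switched trajectory: x(t) = A_{σ(t)} ⋯ A_{σ(1)} x. -/
def traj {d : ℕ} (σ : ℕ → Matrix (Fin d) (Fin d) ℝ) (x : EuclideanSpace ℝ (Fin d)) :
    ℕ → EuclideanSpace ℝ (Fin d)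
  | 0 => x
  | t + 1 => (WithLp.toLp 2 ((σ (t + 1)).mulVec (traj σ x t)) : EuclideanSpace ℝ (Fin d))

/-- Pointwise stabilization radius at x. -/
def stabRadAt {d : ℕ} (M : Set (Matrix (Fin d) (Fin d) ℝ)) (x : EuclideanSpace ℝ (Fin d)) : ℝ :=
  sInf {lam : ℝ | 0 ≤ lam ∧ ∃ σ : ℕ → Matrix (Fin d) (Fin d) ℝ, (∀ t, σ t ∈ M) ∧
    ∃ C > 0, ∀ t : ℕ, ‖traj σ x t‖ ≤ C * lam ^ t * ‖x‖}

/-- Pointwise stabilization radius. -/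
def stabRad {d : ℕ} (M : Set (Matrix (Fin d) (Fin d) ℝ)) : ℝ :=
  ⨆ x : EuclideanSpace ℝ (Fin d), stabRadAt M x

/-- The set of products of exactly t matrices from M. -/
def prodSet {d : ℕ} (M : Set (Matrix (Fin d) (Fin d) ℝ)) (t : ℕ) :
    Set (Matrix (Fin d) (Fin d) ℝ) :=
  {P | ∃ A : Fin t → Matrix (Fin d) (Fin d) ℝ, (∀ i, A i ∈ M) ∧ P = (List.ofFn A).prod}
/-- A = diag(2,1,1). -/
def Amat : Matrix (Fin 3) (Fin 3) ℝ := !![2, 0, 0; 0, 1, 0; 0, 0, 1]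

/-- B = [[0,1,1],[0,1,1],[0,1,1]]. -/
def Bmat : Matrix (Fin 3) (Fin 3) ℝ := !![0, 1, 1; 0, 1, 1; 0, 1, 1]

/-- The all-ones vector e = (1,1,1)ᵀ. -/
def eVec : EuclideanSpace ℝ (Fin 3) := WithLp.toLp 2 (fun _ : Fin 3 => (1 : ℝ))

/-!
Since `B * A = B`, a block of `m - 1` steps of `A` followed by one step of `B` acts as `B`.
Hence the law that switches to `B` exactly at the multiples of `m` keeps every trajectory below
`max 1 ‖A‖ ^ m * ‖B‖ ^ (t / m) * ‖x‖`, and choosing `m` with `‖B‖ ≤ λ ^ m` realises any rate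
`λ > 1` from any starting point. Conversely, while the second and third coordinates are
nonnegative neither `A` nor `B` decreases them, so from `e` the second coordinate stays `≥ 1`
and no rate below `1` is possible.
-/

open Topology

lemma ContinuousLinearMap.norm_pow_apply_le {𝕜 E : Type*} [NontriviallyNormedField 𝕜]
    [SeminormedAddCommGroup E] [NormedSpace 𝕜 E] (T : E →L[𝕜] E) (n : ℕ) (x : E) :
    ‖(T ^ n) x‖ ≤ ‖T‖ ^ n * ‖x‖ := by
  induction n with
  | zero => simp
  | succ n ih =>
    rw [pow_succ', mul_apply_eq_comp, pow_succ', mul_assoc]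
    exact T.le_opNorm_of_le ih

lemma mul_pow_eq_of_mul_eq {M : Type*} [Monoid M] {a b : M} (h : b * a = b) (n : ℕ) :
    b * a ^ n = b := by
  induction n with
  | zero => rw [pow_zero, mul_one]
  | succ n ih => rw [pow_succ, ← mul_assoc, ih, h]

lemma one_le_of_forall_le_mul_pow {c C lam : ℝ} (hc : 0 < c) (hlam : 0 ≤ lam)
    (h : ∀ t : ℕ, c ≤ C * lam ^ t) : 1 ≤ lam := by
  by_contra! hlt
  have hlim : Tendsto (fun t : ℕ => C * lam ^ t) atTop (𝓝 0) := by
    simpa using (tendsto_pow_atTop_nhds_zero_of_lt_one hlam hlt).const_mul C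
  obtain ⟨t, ht⟩ := (hlim.eventually (gt_mem_nhds hc)).exists
  exact (h t).not_gt ht

section Switching

variable {d : ℕ}

lemma traj_succ_eq (σ : ℕ → Matrix (Fin d) (Fin d) ℝ) (x : EuclideanSpace ℝ (Fin d)) (t : ℕ) :
    traj σ x (t + 1) = toEuclideanCLM (𝕜 := ℝ) (σ (t + 1)) (traj σ x t) := rfl

lemma traj_add (σ : ℕ → Matrix (Fin d) (Fin d) ℝ) (x : EuclideanSpace ℝ (Fin d)) (s t : ℕ) :
    traj σ x (s + t) = traj (fun i => σ (s + i)) (traj σ x s) t := by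
  induction t with
  | zero => rfl
  | succ t ih => rw [← add_assoc, traj_succ_eq, ih]; rfl

def periodicSwitch (A B : Matrix (Fin d) (Fin d) ℝ) (m : ℕ) : ℕ → Matrix (Fin d) (Fin d) ℝ :=
  fun t => if m ∣ t then B else A

namespace periodicSwitch

variable {A B : Matrix (Fin d) (Fin d) ℝ} {m : ℕ}

lemma mem (t : ℕ) : periodicSwitch A B m t ∈ ({A, B} : Set (Matrix (Fin d) (Fin d) ℝ)) := by
  unfold periodicSwitch; split_ifs <;> simp

lemma shift_mul (q : ℕ) : (fun i => periodicSwitch A B m (m * q + i)) = periodicSwitch A B m := by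
  funext i
  simp only [periodicSwitch, Nat.dvd_add_right (dvd_mul_right m q)]

lemma traj_of_lt {r : ℕ} (hr : r < m) (y : EuclideanSpace ℝ (Fin d)) :
    traj (periodicSwitch A B m) y r = toEuclideanCLM (𝕜 := ℝ) (A ^ r) y := by
  induction r with
  | zero => simp [traj]
  | succ r ih =>
    have hndvd : ¬ m ∣ r + 1 := Nat.not_dvd_of_pos_of_lt r.succ_pos hr
    rw [traj_succ_eq, ih (by omega), periodicSwitch, if_neg hndvd, pow_succ', map_mul]
    rfl

lemma traj_self (hm : 0 < m) (hBA : B * A = B) (y : EuclideanSpace ℝ (Fin d)) :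
    traj (periodicSwitch A B m) y m = toEuclideanCLM (𝕜 := ℝ) B y := by
  obtain ⟨k, rfl⟩ := Nat.exists_eq_add_one_of_ne_zero hm.ne'
  rw [traj_succ_eq, traj_of_lt (Nat.lt_succ_self k), periodicSwitch, if_pos dvd_rfl,
    ← mul_apply_eq_comp, ← map_mul, mul_pow_eq_of_mul_eq hBA]

lemma traj_mul (hm : 0 < m) (hBA : B * A = B) (q : ℕ) (x : EuclideanSpace ℝ (Fin d)) :
    traj (periodicSwitch A B m) x (m * q) = toEuclideanCLM (𝕜 := ℝ) (B ^ q) x := by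
  induction q with
  | zero => simp [traj]
  | succ q ih =>
    rw [mul_add_one, traj_add, shift_mul, traj_self hm hBA, ih, pow_succ', map_mul]
    rfl

lemma traj_mul_add (hm : 0 < m) (hBA : B * A = B) (q : ℕ) {r : ℕ} (hr : r < m)
    (x : EuclideanSpace ℝ (Fin d)) :
    traj (periodicSwitch A B m) x (m * q + r) = toEuclideanCLM (𝕜 := ℝ) (A ^ r * B ^ q) x := by
  rw [traj_add, shift_mul, traj_of_lt hr, traj_mul hm hBA, map_mul]
  rfl

lemma norm_traj_le (hm : 0 < m) (hBA : B * A = B) (x : EuclideanSpace ℝ (Fin d)) (t : ℕ) :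
    ‖traj (periodicSwitch A B m) x t‖ ≤
      max 1 ‖toEuclideanCLM (𝕜 := ℝ) A‖ ^ m * ‖toEuclideanCLM (𝕜 := ℝ) B‖ ^ (t / m) * ‖x‖ := by
  set TA := toEuclideanCLM (𝕜 := ℝ) A
  set TB := toEuclideanCLM (𝕜 := ℝ) B
  have hTA : ‖TA‖ ^ (t % m) ≤ max 1 ‖TA‖ ^ m :=
    (pow_le_pow_left₀ (norm_nonneg _) (le_max_right _ _) _).trans
      (pow_le_pow_right₀ (le_max_left _ _) (Nat.mod_lt t hm).le)
  rw [← Nat.div_add_mod t m, traj_mul_add hm hBA _ (Nat.mod_lt t hm), map_mul, map_pow, map_pow,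
    mul_apply_eq_comp, Nat.div_add_mod, mul_assoc]
  calc ‖(TA ^ (t % m)) ((TB ^ (t / m)) x)‖ ≤ ‖TA‖ ^ (t % m) * ‖(TB ^ (t / m)) x‖ :=
        TA.norm_pow_apply_le _ _
    _ ≤ max 1 ‖TA‖ ^ m * (‖TB‖ ^ (t / m) * ‖x‖) := by
        gcongr
        exact TB.norm_pow_apply_le _ _

end periodicSwitch

lemma exists_switching_norm_traj_le {A B : Matrix (Fin d) (Fin d) ℝ} (hBA : B * A = B) {lam : ℝ}
    (hlam : 1 < lam) (x : EuclideanSpace ℝ (Fin d)) :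
    ∃ σ : ℕ → Matrix (Fin d) (Fin d) ℝ, (∀ t, σ t ∈ ({A, B} : Set _)) ∧
      ∃ C > 0, ∀ t : ℕ, ‖traj σ x t‖ ≤ C * lam ^ t * ‖x‖ := by
  obtain ⟨n, hn⟩ := pow_unbounded_of_one_lt ‖toEuclideanCLM (𝕜 := ℝ) B‖ hlam
  have hB : ‖toEuclideanCLM (𝕜 := ℝ) B‖ ≤ lam ^ (n + 1) :=
    hn.le.trans (pow_le_pow_right₀ hlam.le n.le_succ)
  have hpow (t : ℕ) : ‖toEuclideanCLM (𝕜 := ℝ) B‖ ^ (t / (n + 1)) ≤ lam ^ t :=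
    calc ‖toEuclideanCLM (𝕜 := ℝ) B‖ ^ (t / (n + 1)) ≤ (lam ^ (n + 1)) ^ (t / (n + 1)) := by
          gcongr
      _ = lam ^ ((n + 1) * (t / (n + 1))) := (pow_mul _ _ _).symm
      _ ≤ lam ^ t := pow_le_pow_right₀ hlam.le (Nat.mul_div_le t _)
  refine ⟨periodicSwitch A B (n + 1), periodicSwitch.mem,
    max 1 ‖toEuclideanCLM (𝕜 := ℝ) A‖ ^ (n + 1), by positivity, fun t => ?_⟩
  refine (periodicSwitch.norm_traj_le n.succ_pos hBA x t).trans ?_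
  gcongr
  exact hpow t

lemma stabRadAt_pair_le_one {A B : Matrix (Fin d) (Fin d) ℝ} (hBA : B * A = B)
    (x : EuclideanSpace ℝ (Fin d)) : stabRadAt {A, B} x ≤ 1 :=
  le_of_forall_gt_imp_ge_of_dense fun _ hlam =>
    csInf_le ⟨0, fun _ h => h.1⟩ ⟨by linarith, exists_switching_norm_traj_le hBA hlam x⟩

end Switching

lemma Bmat_mul_Amat : Bmat * Amat = Bmat := by
  rw [Amat, Bmat]
  norm_num [Matrix.mul_fin_three]

lemma le_mulVec_apply_of_mem {N : Matrix (Fin 3) (Fin 3) ℝ} (hN : N ∈ ({Amat, Bmat} : Set _))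
    {v : Fin 3 → ℝ} (h1 : 0 ≤ v 1) (h2 : 0 ≤ v 2) : v 1 ≤ (N *ᵥ v) 1 ∧ v 2 ≤ (N *ᵥ v) 2 := by
  rcases hN with rfl | rfl <;> simp [Amat, Bmat, Matrix.mulVec, dotProduct, Fin.sum_univ_three]
  constructor <;> linarith

section Trajectories

variable {σ : ℕ → Matrix (Fin 3) (Fin 3) ℝ} {x : EuclideanSpace ℝ (Fin 3)}

lemma le_traj_apply (hσ : ∀ t, σ t ∈ ({Amat, Bmat} : Set _)) (h1 : 0 ≤ x.ofLp 1)
    (h2 : 0 ≤ x.ofLp 2) (t : ℕ) :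
    x.ofLp 1 ≤ (traj σ x t).ofLp 1 ∧ x.ofLp 2 ≤ (traj σ x t).ofLp 2 := by
  induction t with
  | zero => exact ⟨le_rfl, le_rfl⟩
  | succ t ih =>
    have hstep := le_mulVec_apply_of_mem (hσ (t + 1)) (h1.trans ih.1) (h2.trans ih.2)
    exact ⟨ih.1.trans hstep.1, ih.2.trans hstep.2⟩

lemma monotone_traj_apply_one (hσ : ∀ t, σ t ∈ ({Amat, Bmat} : Set _))
    (h1 : 0 ≤ x.ofLp 1) (h2 : 0 ≤ x.ofLp 2) : Monotone fun t => (traj σ x t).ofLp 1 :=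
  monotone_nat_of_le_succ fun t =>
    (le_mulVec_apply_of_mem (hσ (t + 1)) (h1.trans (le_traj_apply hσ h1 h2 t).1)
      (h2.trans (le_traj_apply hσ h1 h2 t).2)).1

end Trajectories

lemma one_le_stabRadAt_eVec : 1 ≤ stabRadAt {Amat, Bmat} eVec := by
  refine le_csInf ⟨2, zero_le_two, exists_switching_norm_traj_le Bmat_mul_Amat one_lt_two eVec⟩ ?_
  rintro lam ⟨hlam, σ, hσ, C, -, hC⟩
  refine one_le_of_forall_le_mul_pow (C := C * ‖eVec‖) one_pos hlam fun t => ?_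
  calc (1 : ℝ) ≤ (traj σ eVec t).ofLp 1 :=
        (le_traj_apply (x := eVec) hσ zero_le_one zero_le_one t).1
    _ ≤ ‖traj σ eVec t‖ := (Real.le_norm_self _).trans (PiLp.norm_apply_le _ _)
    _ ≤ C * lam ^ t * ‖eVec‖ := hC t
    _ = C * ‖eVec‖ * lam ^ t := by ring

/-- the norms ‖BAᵗ‖ are uniformly bounded in t, the second
coordinate of any trajectory from e is nondecreasing, and consequently
ρ̃ₑ(M) = ρ̃(M) = 1 for M = {A, B}. -/
theorem stmt9 :
    (∃ C : ℝ, ∀ t : ℕ, ‖Matrix.toEuclideanCLM (𝕜 := ℝ) (Bmat * Amat ^ t)‖ ≤ C) ∧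
    (∀ σ : ℕ → Matrix (Fin 3) (Fin 3) ℝ, (∀ t, σ t ∈ ({Amat, Bmat} : Set _)) →
      Monotone fun t : ℕ => (traj σ eVec t : Fin 3 → ℝ) 1) ∧
    stabRadAt {Amat, Bmat} eVec = 1 ∧ stabRad {Amat, Bmat} = 1 := by
  have hle := stabRadAt_pair_le_one Bmat_mul_Amat
  have hAt : stabRadAt {Amat, Bmat} eVec = 1 := le_antisymm (hle eVec) one_le_stabRadAt_eVec
  refine ⟨⟨‖toEuclideanCLM (𝕜 := ℝ) Bmat‖, fun t => by rw [mul_pow_eq_of_mul_eq Bmat_mul_Amat]⟩,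
    fun σ hσ => monotone_traj_apply_one hσ zero_le_one zero_le_one, hAt, ?_⟩
  exact le_antisymm (ciSup_le hle) (hAt ▸ le_ciSup ⟨1, Set.forall_mem_range.2 hle⟩ eVec)
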